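/- arXiv:2006.04370 — 3 statements merged into one kernel-verified Lean document; each statement's English description precedes it below -/
import Mathlib

section
/- For each fixed k ∈ ℕ there is L > 0 such that the following holds for all sufficiently large r. There exists a k-graph T with at most L·r vertices, at most L·r edges, and an identified set Z of r vertices, such that for every subset W ⊆ Z with |W| < r/2 for which the number of vertices of T − W is divisible by k, the k-graph T − W (obtained by deleting the vertices of W and all edges meeting W) has a perfect matching. -/
open Finset MeasureTheory Filter

namespace DiracRandom

/-- The degree of a vertex set `S`: the number of edges of `E` containing `S`. -/
def degS {n : ℕ} (E : Finset (Finset (Fin n))) (S : Finset (Fin n)) : ℕ :=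
  (E.filter fun e => S ⊆ e).card

/-- A matching: a family of pairwise disjoint edges. -/
def IsMatching {n : ℕ} (M : Finset (Finset (Fin n))) : Prop :=
  ∀ e ∈ M, ∀ f ∈ M, e ≠ f → Disjoint e f

/-- A perfect matching of the hypergraph with edge set `E` on vertex set `Fin n`. -/
def IsPerfectMatching {n : ℕ} (E M : Finset (Finset (Fin n))) : Prop :=
  M ⊆ E ∧ IsMatching M ∧ ∀ v : Fin n, ∃ e ∈ M, v ∈ e

/-- `mDirac d k n` is `m_d(k,n)`: the smallest `m` such that every `n`-vertex `k`-graph with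
minimum `d`-degree at least `m` has a perfect matching. -/
noncomputable def mDirac (d k n : ℕ) : ℕ :=
  sInf {m : ℕ | ∀ E : Finset (Finset (Fin n)), (∀ e ∈ E, e.card = k) →
    (∀ S : Finset (Fin n), S.card = d → m ≤ degS E S) →
    ∃ M, IsPerfectMatching E M}

/-- Sample space for the random `k`-graph on `n` vertices. -/
abbrev EdgeSpace (n k : ℕ) := {e : Finset (Fin n) // e.card = k} → Bool

/-- Bernoulli measure with parameter `p` (clamped to `[0,1]`). -/
noncomputable def bern (p : ℝ) : Measure Bool :=
  (PMF.bernoulli (min (Real.toNNReal p) 1) (min_le_right _ _)).toMeasure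

instance (p : ℝ) : IsProbabilityMeasure (bern p) := by
  unfold bern; infer_instance

/-- The law of the binomial random `k`-graph `H^k(n,p)`: each `k`-set is an edge
independently with probability `p`. -/
noncomputable def Hk (n k : ℕ) (p : ℝ) : Measure (EdgeSpace n k) :=
  Measure.pi fun _ => bern p

/-- The edge set of an outcome of the random hypergraph. -/
def edgesOf {n k : ℕ} (ω : EdgeSpace n k) : Finset (Finset (Fin n)) :=
  (Finset.univ.filter fun e => ω e = true).image Subtype.val

/-! Vertices `0, …, k r - 1` come in `r` blocks of `k` consecutive vertices, and the flexible
vertices are the first vertices of the blocks. The edges are all `k`-subsets of two consecutive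
blocks, at most `4 ^ k * r` of them. After deleting `W`, cut the surviving vertices, in
increasing order, into runs of `k`: every block keeps its `k - 1` non-flexible vertices, so each
run lies within two consecutive blocks and is an edge. -/

section IntervalPartition

variable {α : Type*} [LinearOrder α]

def IsIntervalIn (G R : Finset α) : Prop :=
  ∀ x ∈ G, ∀ y ∈ G, ∀ u ∈ R, x ≤ u → u ≤ y → u ∈ G

lemma card_filter_val_div_eq {m k g : ℕ} (hk : 0 < k) (hm : g * k + k ≤ m) :
    #{i : Fin m | i.val / k = g} = k := by
  rw [← card_map Fin.valEmbedding]
  convert Nat.card_Ico (g * k) (g * k + k) using 2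
  · ext l
    simp only [Finset.mem_map, mem_filter, mem_univ, true_and, Fin.valEmbedding_apply, mem_Ico,
      Nat.div_eq_iff hk]
    exact ⟨fun ⟨i, hi, hl⟩ => hl ▸ by omega, fun hl => ⟨⟨l, by omega⟩, by simp; omega, rfl⟩⟩
  · omega

/-- The runs are the images of `{i | i / k = g}` under the increasing enumeration of `R`. -/
theorem exists_partition_into_intervals (R : Finset α) {k : ℕ} (hk : 0 < k)
    (hdvd : k ∣ R.card) :
    ∃ M : Finset (Finset α), (M : Set (Finset α)).PairwiseDisjoint id ∧
      (∀ v ∈ R, ∃ G ∈ M, v ∈ G) ∧ ∀ G ∈ M, G ⊆ R ∧ G.card = k ∧ IsIntervalIn G R := by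
  set f := R.orderEmbOfFin rfl
  let run (g : ℕ) : Finset α := ({i : Fin R.card | i.val / k = g} : Finset _).map f.toEmbedding
  have mem_run {g : ℕ} {v : α} : v ∈ run g ↔ ∃ i : Fin R.card, i.val / k = g ∧ f i = v := by
    simp [run]
  refine ⟨univ.image fun i : Fin R.card => run (i.val / k), ?_, ?_, ?_⟩
  · simp only [Set.PairwiseDisjoint, coe_image, coe_univ, Set.image_univ]
    rintro _ ⟨i, rfl⟩ _ ⟨j, rfl⟩ hne
    refine (Finset.disjoint_map _).2 (disjoint_filter.2 fun l _ hi hj => hne ?_)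
    simp only [← hi, ← hj]
  · intro v hv
    obtain ⟨i, rfl⟩ : v ∈ Set.range f := by rwa [range_orderEmbOfFin]
    exact ⟨run (i.val / k), mem_image_of_mem _ (mem_univ i), mem_run.2 ⟨i, rfl, rfl⟩⟩
  · simp only [mem_image, mem_univ, true_and]
    rintro _ ⟨i, rfl⟩
    refine ⟨fun v hv => ?_, ?_, ?_⟩
    · obtain ⟨j, -, rfl⟩ := mem_run.1 hv
      exact orderEmbOfFin_mem R rfl j
    · rw [card_map]
      apply card_filter_val_div_eq hk
      have := Nat.div_lt_div_of_lt_of_dvd hdvd i.isLt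
      have := Nat.div_mul_cancel hdvd
      nlinarith
    · rintro _ hx _ hy u hu hxu huy
      obtain ⟨a, ha, rfl⟩ := mem_run.1 hx
      obtain ⟨b, hb, rfl⟩ := mem_run.1 hy
      obtain ⟨c, rfl⟩ : u ∈ Set.range f := by rwa [range_orderEmbOfFin]
      refine mem_run.2 ⟨c, le_antisymm ?_ ?_, rfl⟩
      · rw [← hb]; exact Nat.div_le_div_right (f.le_iff_le.1 huy)
      · rw [← ha]; exact Nat.div_le_div_right (f.le_iff_le.1 hxu)

end IntervalPartition

section Template

def window (k n i : ℕ) : Finset (Fin n) := {v | k * i ≤ v.val ∧ v.val < k * i + 2 * k}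

def template (k r : ℕ) : Finset (Finset (Fin (k * r))) :=
  (range r).biUnion fun i => (window k (k * r) i).powersetCard k

def flexibleSet (k r : ℕ) : Finset (Fin (k * r)) := {v | k ∣ v.val}

lemma card_window_le (k n i : ℕ) : (window k n i).card ≤ 2 * k := by
  calc (window k n i).card ≤ (Ico (k * i) (k * i + 2 * k)).card :=
        card_le_card_of_injOn Fin.val (fun v hv => by simpa [window] using hv)
          Fin.val_injective.injOn
    _ = 2 * k := by simp

lemma card_template_le (k r : ℕ) : (template k r).card ≤ 4 ^ k * r := by
  calc (template k r).card ≤ ∑ i ∈ range r, ((window k (k * r) i).powersetCard k).card :=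
        card_biUnion_le
    _ ≤ ∑ _i ∈ range r, 4 ^ k := sum_le_sum fun i _ => by
        rw [card_powersetCard, show 4 ^ k = 2 ^ (2 * k) by rw [pow_mul]; norm_num]
        exact (Nat.choose_le_two_pow _ _).trans
          (Nat.pow_le_pow_right two_pos (card_window_le k _ i))
    _ = 4 ^ k * r := by rw [sum_const, card_range, smul_eq_mul, mul_comm]

lemma card_of_mem_template {k r : ℕ} {e : Finset (Fin (k * r))} (he : e ∈ template k r) :
    e.card = k := by
  obtain ⟨i, -, he⟩ := mem_biUnion.1 he
  exact (mem_powersetCard.1 he).2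

lemma card_flexibleSet {k : ℕ} (hk : 0 < k) (r : ℕ) : (flexibleSet k r).card = r := by
  refine (card_bij (fun v _ => v.val / k) (fun v _ => ?_) (fun v hv w hw h => ?_)
    (fun i hi => ?_)).trans (card_range r)
  · exact mem_range.2 (Nat.div_lt_of_lt_mul v.isLt)
  · simp only [flexibleSet, mem_filter, mem_univ, true_and] at hv hw
    exact Fin.ext (by rw [← Nat.mul_div_cancel' hv, ← Nat.mul_div_cancel' hw, h])
  · refine ⟨⟨k * i, Nat.mul_lt_mul_of_pos_left (mem_range.1 hi) hk⟩, by simp [flexibleSet], ?_⟩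
    exact Nat.mul_div_cancel_left i hk

/-- The `k - 1` non-flexible vertices of the block after that of `x` survive the deletion of
`W`, so a run of `k` surviving vertices through `x` cannot reach beyond that block. -/
lemma lt_of_isIntervalIn_compl {k n : ℕ} {W G : Finset (Fin n)} (hW : ∀ w ∈ W, k ∣ w.val)
    (hG : IsIntervalIn G Wᶜ) (hcard : G.card = k) {x y : Fin n} (hx : x ∈ G) (hy : y ∈ G) :
    y.val < k * (x.val / k) + 2 * k := by
  have hk : 0 < k := hcard ▸ card_pos.2 ⟨x, hx⟩
  set q := x.val / k
  have hxq : x.val < k * q + k := by simpa [mul_add] using Nat.lt_mul_div_succ x.val hk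
  by_contra! hyq
  let B : Finset (Fin n) := (Ioo (k * q + k) (k * q + 2 * k)).attachFin fun m hm => by
    have := y.isLt; simp only [mem_Ioo] at hm; omega
  have hB : ∀ u ∈ B, u ∈ G := by
    intro u hu
    simp only [B, mem_attachFin, mem_Ioo] at hu
    have hu_ndvd : ¬ k ∣ u.val := by
      rintro ⟨c, hc⟩
      have h1 : q + 1 < c := Nat.lt_of_mul_lt_mul_left (a := k) (by rw [mul_add]; omega)
      have h2 : c < q + 2 := Nat.lt_of_mul_lt_mul_left (a := k) (by rw [mul_add]; omega)
      omega
    refine hG x hx y hy u (mem_compl.2 fun huW => hu_ndvd (hW u huW)) ?_ ?_ <;>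
      rw [Fin.le_def] <;> omega
  have hsub : insert y (insert x B) ⊆ G := insert_subset hy (insert_subset hx hB)
  have hxB : x ∉ B := by simp [B]; omega
  have hyB : y ∉ insert x B := by
    simp only [B, mem_insert, mem_attachFin, mem_Ioo, Fin.ext_iff]; omega
  have := card_le_card hsub
  rw [card_insert_of_notMem hyB, card_insert_of_notMem hxB, card_attachFin, Nat.card_Ioo,
    hcard] at this
  omega

lemma mem_template_of_isIntervalIn_compl {k r : ℕ} {W G : Finset (Fin (k * r))}
    (hk : 0 < k) (hW : W ⊆ flexibleSet k r) (hG : IsIntervalIn G Wᶜ) (hcard : G.card = k) :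
    G ∈ template k r := by
  have hne : G.Nonempty := card_pos.1 (by omega)
  have hW' : ∀ w ∈ W, k ∣ w.val := fun w hw => by simpa [flexibleSet] using hW hw
  obtain ⟨x, hxG, hxmin⟩ : ∃ x ∈ G, ∀ y ∈ G, x ≤ y :=
    ⟨G.min' hne, G.min'_mem hne, fun y hy => G.min'_le y hy⟩
  refine mem_biUnion.2 ⟨x.val / k, ?_, mem_powersetCard.2 ⟨fun y hy => ?_, hcard⟩⟩
  · exact mem_range.2 (Nat.div_lt_of_lt_mul x.isLt)
  · have hxy : x.val ≤ y.val := hxmin y hy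
    have := Nat.mul_div_le x.val k
    have := lt_of_isIntervalIn_compl hW' hG hcard hxG hy
    simp only [window, mem_filter, mem_univ, true_and]
    omega

theorem exists_perfectMatching_template_sdiff {k r : ℕ} (hk : 0 < k) {W : Finset (Fin (k * r))}
    (hW : W ⊆ flexibleSet k r) (hdvd : k ∣ k * r - W.card) :
    ∃ M ⊆ template k r, IsMatching M ∧ (∀ e ∈ M, Disjoint e W) ∧
      ∀ v : Fin (k * r), v ∉ W → ∃ e ∈ M, v ∈ e := by
  obtain ⟨M, hdisj, hcover, hruns⟩ := exists_partition_into_intervals Wᶜ hk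
    (by rwa [card_compl, Fintype.card_fin])
  refine ⟨M, fun G hG => ?_, fun e he f hf hne => hdisj he hf hne,
    fun e he => disjoint_left.2 fun v hv => mem_compl.1 ((hruns e he).1 hv), fun v hv => ?_⟩
  · obtain ⟨-, hcard, hint⟩ := hruns G hG
    exact mem_template_of_isIntervalIn_compl hk hW hint hcard
  · exact hcover v (mem_compl.2 hv)

end Template

/-- **resilient template.** For each fixed `k` there is `L > 0` such that for
all sufficiently large `r` there exists a `k`-graph `T` with at most `L·r` vertices, at most
`L·r` edges, and an identified set `Z` of `r` vertices, such that for every `W ⊆ Z` with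
`|W| < r/2` for which the number of vertices of `T - W` is divisible by `k`, the `k`-graph
`T - W` has a perfect matching. -/
theorem resilient_template (k : ℕ) (hk : 0 < k) :
    ∃ L : ℝ, 0 < L ∧ ∃ r₀ : ℕ, ∀ r : ℕ, r₀ ≤ r →
      ∃ (N : ℕ) (T : Finset (Finset (Fin N))) (Z : Finset (Fin N)),
        (N : ℝ) ≤ L * r ∧ (T.card : ℝ) ≤ L * r ∧ (∀ e ∈ T, e.card = k) ∧ Z.card = r ∧
        ∀ W ⊆ Z, (W.card : ℝ) < (r : ℝ) / 2 → k ∣ (N - W.card) →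
          ∃ M ⊆ T, IsMatching M ∧ (∀ e ∈ M, Disjoint e W) ∧
            ∀ v : Fin N, v ∉ W → ∃ e ∈ M, v ∈ e := by
  have hk4 : k ≤ 4 ^ k := Nat.lt_two_pow_self.le.trans (Nat.pow_le_pow_left (by norm_num) k)
  refine ⟨4 ^ k, by positivity, 0, fun r _ => ⟨k * r, template k r, flexibleSet k r, ?_, ?_,
    fun e he => card_of_mem_template he, card_flexibleSet hk r,
    fun W hW _ hdvd => exists_perfectMatching_template_sdiff hk hW hdvd⟩⟩
  · exact_mod_cast Nat.mul_le_mul_right r hk4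
  · exact_mod_cast card_template_le k r

end DiracRandom
end

section
/- For any k ≥ 2 there is some K ∈ ℕ such that the following holds. For all sufficiently large r there is a k-graph G with r vertices and at most K·r edges such that every set of ⌈r/2⌉ vertices of G contains an edge (i.e., G has no independent set of size r/2). -/
open Finset MeasureTheory Filter

namespace DiracRandom

/-!
Cut the `r` vertices into consecutive blocks of `m = 2k - 1` vertices and take as edges all
`k`-subsets of each block; there are at most `r · (m choose k)` of them. A set containing no edge
meets each of the at most `r / m + 1` blocks in at most `k - 1` vertices, and
`(k - 1)(r / m + 1) < r / 2` once `r ≥ m²`.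
-/

section FiberCliques

variable {α β : Type*} [Fintype α] [DecidableEq α] [DecidableEq β]

def fiberCliques (f : α → β) (k : ℕ) : Finset (Finset α) :=
  (univ.image f).biUnion fun j => (univ.filter (f · = j)).powersetCard k

variable {f : α → β} {k : ℕ}

theorem card_of_mem_fiberCliques {e : Finset α} (he : e ∈ fiberCliques f k) : e.card = k := by
  obtain ⟨j, -, hj⟩ := mem_biUnion.mp he
  exact (mem_powersetCard.mp hj).2

theorem card_fiberCliques_le {m : ℕ} (hf : ∀ j, (univ.filter (f · = j)).card ≤ m) :
    (fiberCliques f k).card ≤ (univ.image f).card * m.choose k :=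
  calc (fiberCliques f k).card
      ≤ ∑ j ∈ univ.image f, ((univ.filter (f · = j)).powersetCard k).card := card_biUnion_le
    _ ≤ ∑ _j ∈ univ.image f, m.choose k := by
      gcongr with j
      rw [card_powersetCard]
      exact Nat.choose_le_choose k (hf j)
    _ = (univ.image f).card * m.choose k := by rw [sum_const, smul_eq_mul]

theorem exists_mem_fiberCliques_subset {A : Finset α}
    (hA : (univ.image f).card * (k - 1) < A.card) : ∃ e ∈ fiberCliques f k, e ⊆ A := by
  obtain ⟨j, hj, hfiber⟩ := exists_lt_card_fiber_of_mul_lt_card_of_maps_to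
    (fun v _ => mem_image_of_mem f (mem_univ v)) hA
  obtain ⟨e, heA, he⟩ := exists_subset_card_eq (Nat.le_of_pred_lt hfiber)
  refine ⟨e, mem_biUnion.mpr ⟨j, hj, mem_powersetCard.mpr ⟨fun v hv => ?_, he⟩⟩,
    fun v hv => (mem_filter.mp (heA hv)).1⟩
  exact mem_filter.mpr ⟨mem_univ v, (mem_filter.mp (heA hv)).2⟩

end FiberCliques

section Blocks

variable {r m : ℕ}

theorem card_filter_div_eq_le (hm : 0 < m) (j : ℕ) :
    (univ.filter fun v : Fin r => v.val / m = j).card ≤ m := by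
  calc (univ.filter fun v : Fin r => v.val / m = j).card ≤ (range m).card := by
        refine card_le_card_of_injOn (fun v => v.val % m)
          (fun v _ => mem_range.mpr (Nat.mod_lt _ hm)) ?_
        intro v hv w hw hvw
        rw [mem_coe, mem_filter] at hv hw
        refine Fin.ext ?_
        rw [← Nat.div_add_mod v.val m, ← Nat.div_add_mod w.val m, hv.2, hw.2]
        exact congrArg (m * j + ·) hvw
    _ = m := card_range m

theorem card_image_div_le : (univ.image fun v : Fin r => v.val / m).card ≤ r / m + 1 := by
  calc (univ.image fun v : Fin r => v.val / m).card ≤ (range (r / m + 1)).card := by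
        refine card_le_card fun j hj => ?_
        obtain ⟨v, -, rfl⟩ := mem_image.mp hj
        exact mem_range.mpr (Nat.lt_succ_of_le (Nat.div_le_div_right v.isLt.le))
    _ = r / m + 1 := card_range _

theorem sub_one_mul_div_add_one_lt (hm : 0 < m) (hr : m * m ≤ r) :
    (m - 1) * (r / m + 1) < r := by
  have hmt : m ≤ r / m := (Nat.le_div_iff_mul_le hm).mpr hr
  have htr : r / m * m ≤ r := Nat.div_mul_le_self r m
  obtain ⟨n, rfl⟩ : ∃ n, m = n + 1 := ⟨m - 1, by omega⟩
  simp only [Nat.add_sub_cancel]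
  nlinarith

end Blocks

/-- For any `k ≥ 2` there is `K` such that for all sufficiently large `r`
there is a `k`-graph `G` with `r` vertices and at most `K·r` edges in which every set of
`⌈r/2⌉` vertices contains an edge (i.e. `G` has no independent set of size `r/2`). -/
theorem no_large_independent_set (k : ℕ) (hk : 2 ≤ k) :
    ∃ K : ℕ, ∃ r₀ : ℕ, ∀ r : ℕ, r₀ ≤ r →
      ∃ G : Finset (Finset (Fin r)), (∀ e ∈ G, e.card = k) ∧ G.card ≤ K * r ∧
        ∀ A : Finset (Fin r), ⌈(r : ℝ) / 2⌉₊ ≤ A.card → ∃ e ∈ G, e ⊆ A := by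
  set m := 2 * k - 1
  have hm : 0 < m := by omega
  refine ⟨m.choose k, m * m, fun r hr => ⟨fiberCliques (fun v : Fin r => v.val / m) k,
    fun e => card_of_mem_fiberCliques, ?_, fun A hA => exists_mem_fiberCliques_subset ?_⟩⟩
  · calc _ ≤ (univ.image fun v : Fin r => v.val / m).card * m.choose k :=
          card_fiberCliques_le (card_filter_div_eq_le hm)
      _ ≤ r * m.choose k := by
          gcongr
          exact card_image_le.trans (card_univ.trans (Fintype.card_fin r)).le
      _ = m.choose k * r := mul_comm _ _
  · have hblocks := sub_one_mul_div_add_one_lt hm hr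
    rw [show m - 1 = 2 * (k - 1) by omega] at hblocks
    have hhalf : (r / m + 1) * (k - 1) < ⌈(r : ℝ) / 2⌉₊ := by
      rw [Nat.lt_ceil, lt_div_iff₀ two_pos]
      exact_mod_cast (by linarith : (r / m + 1) * (k - 1) * 2 < r)
    calc _ ≤ (r / m + 1) * (k - 1) := Nat.mul_le_mul_right _ card_image_div_le
      _ < A.card := hhalf.trans_le hA

end DiracRandom
end

section
/- Fix η > 0 and k ∈ ℕ. There is K > 0 such that for any k-uniform contracted absorber H with girth at least K, the k-density satisfies m_k(H) ≤ 2/k + η. -/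
/-!
Counting incidences: a vertex of a contracted absorber other than a root has degree at most `2`
and each of the `k` roots has degree at most `k - 1`, so `k e(H') ≤ 2 v(H') + k²`. This gives the
bound as soon as `v(H') - k ≥ (k + 1)/η`, which holds once `e(H') ≥ K`. If `e(H') < K`, the girth
assumption makes `H'` Berge-acyclic, and removing leaf edges (found by a longest Berge path)
shows `v(H') ≥ (k - 1) e(H') + 1`, whence `(e - 1)/(v - k) ≤ 1/(k - 1) ≤ 2/k`.
-/

open Finset MeasureTheory Filter

namespace DiracRandom

/-- A matching (pairwise disjoint family of edges) in a hypergraph on vertex type `V`. -/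
def IsMatchingV {V : Type*} (M : Finset (Finset V)) : Prop :=
  ∀ e ∈ M, ∀ f ∈ M, e ≠ f → Disjoint e f

/-- `IsAbsorberOn k m H A x`: the `k`-uniform hypergraph with edge set `H` and vertex set
`A` is an absorber rooted on the `m`-tuple of vertices `x`: its edges can be partitioned
into a perfect matching `M₁` of `A` (the covering matching) and a matching `M₂` covering
exactly the vertices of `A` other than the roots (the non-covering matching).
(`m = k` for ordinary absorbers and `m = r·k` for `r`-absorbers.) -/
def IsAbsorberOn {V : Type*} [DecidableEq V] (k m : ℕ)
    (H : Finset (Finset V)) (A : Finset V) (x : Fin m → V) : Prop :=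
  (∀ i, x i ∈ A) ∧ (∀ e ∈ H, e.card = k ∧ e ⊆ A) ∧
  ∃ M₁ M₂ : Finset (Finset V), Disjoint M₁ M₂ ∧ M₁ ∪ M₂ = H ∧
    IsMatchingV M₁ ∧ IsMatchingV M₂ ∧
    (∀ v ∈ A, ∃ e ∈ M₁, v ∈ e) ∧
    (∀ v ∈ A, ((∃ e ∈ M₂, v ∈ e) ↔ v ∉ Set.range x))

/-- A Berge cycle of length `ℓ`: distinct edges `e 0, …, e (ℓ-1)` together with distinct
vertices `v i ∈ e i ∩ e (i+1)` (cyclically). -/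
def HasBergeCycle {V : Type*} (H : Finset (Finset V)) (ℓ : ℕ) : Prop :=
  ∃ (e : Fin ℓ → Finset V) (v : Fin ℓ → V),
    Function.Injective e ∧ Function.Injective v ∧
    (∀ i, e i ∈ H) ∧ ∀ i, v i ∈ e i ∧ v i ∈ e (finRotate ℓ i)

/-- Girth at least `K`: no Berge cycle of length `ℓ` with `2 ≤ ℓ < K`. -/
def GirthAtLeast {V : Type*} (H : Finset (Finset V)) (K : ℕ) : Prop :=
  ∀ ℓ : ℕ, 2 ≤ ℓ → ℓ < K → ¬ HasBergeCycle H ℓ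

/-- A contracted absorber rooted at the (injective) `k`-tuple `x`: a union of `k-1`
absorbers (the sub-absorbers), each rooted at `x`, which are pairwise disjoint except for
the root vertices. -/
def IsContractedAbsorber {V : Type*} [DecidableEq V] (k : ℕ)
    (H : Finset (Finset V)) (x : Fin k → V) : Prop :=
  Function.Injective x ∧
  ∃ (A : Fin (k - 1) → Finset V) (Hs : Fin (k - 1) → Finset (Finset V)),
    (∀ j, IsAbsorberOn k k (Hs j) (A j) x) ∧
    (∀ j j', j ≠ j' → ∀ v, v ∈ A j → v ∈ A j' → v ∈ Finset.image x Finset.univ) ∧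
    H = Finset.univ.biUnion Hs

section BergeCycles

variable {V : Type*}

theorem HasBergeCycle.mono {H H' : Finset (Finset V)} {ℓ : ℕ} (hH : H' ⊆ H)
    (hc : HasBergeCycle H' ℓ) : HasBergeCycle H ℓ := by
  obtain ⟨e, v, he, hv, hmem, hinc⟩ := hc
  exact ⟨e, v, he, hv, fun i => hH (hmem i), hinc⟩

theorem GirthAtLeast.mono {H H' : Finset (Finset V)} {K K' : ℕ} (hH : GirthAtLeast H K)
    (hsub : H' ⊆ H) (hK : K' ≤ K) : GirthAtLeast H' K' :=
  fun ℓ hℓ hℓK hc => hH ℓ hℓ (hℓK.trans_le hK) (hc.mono hsub)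

def IsBergePath (H : Finset (Finset V)) (n : ℕ) (e : ℕ → Finset V) (v : ℕ → V) : Prop :=
  (∀ i ≤ n, e i ∈ H) ∧ Set.InjOn e (Set.Iic n) ∧ Set.InjOn v (Set.Iio n) ∧
    ∀ i < n, v i ∈ e i ∧ v i ∈ e (i + 1)

namespace IsBergePath

variable {H : Finset (Finset V)} {n : ℕ} {e : ℕ → Finset V} {v : ℕ → V}

theorem lt_card (hp : IsBergePath H n e v) : n < #H := by
  have := card_le_card_of_injOn e (s := range (n + 1)) (t := H)
    (fun i hi => hp.1 i (Nat.lt_succ_iff.mp (mem_range.mp hi)))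
    (hp.2.1.mono fun i hi => Nat.lt_succ_iff.mp (mem_range.mp hi))
  rwa [card_range, Nat.succ_le_iff] at this

theorem drop {a m : ℕ} (hp : IsBergePath H (a + m) e v) :
    IsBergePath H m (fun i => e (a + i)) (fun i => v (a + i)) := by
  obtain ⟨hmem, he, hv, hinc⟩ := hp
  refine ⟨fun i hi => hmem _ (by omega), fun i hi j hj hij => ?_, fun i hi j hj hij => ?_,
    fun i hi => ?_⟩
  · have := he (show a + i ≤ a + m by simp_all) (show a + j ≤ a + m by simp_all) hij
    omega
  · have := hv (show a + i < a + m by simp_all) (show a + j < a + m by simp_all) hij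
    omega
  · simpa only [add_assoc] using hinc (a + i) (by omega)

theorem hasBergeCycle (hp : IsBergePath H n e v) {w : V} (hwn : w ∈ e n) (hw₀ : w ∈ e 0)
    (hwv : ∀ i < n, v i ≠ w) : HasBergeCycle H (n + 1) := by
  obtain ⟨hmem, he, hv, hinc⟩ := hp
  refine ⟨fun i => e i, fun i => if (i : ℕ) < n then v i else w, fun i j hij => ?_,
    fun i j hij => ?_, fun i => hmem i (Nat.lt_succ_iff.mp i.isLt), fun i => ?_⟩
  · exact Fin.ext (he (Nat.lt_succ_iff.mp i.isLt) (Nat.lt_succ_iff.mp j.isLt) hij)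
  · have hi := i.isLt
    have hj := j.isLt
    refine Fin.ext ?_
    dsimp only at hij
    split_ifs at hij with h₁ h₂ h₂
    · exact hv h₁ h₂ hij
    · exact absurd hij (hwv _ h₁)
    · exact absurd hij.symm (hwv _ h₂)
    · omega
  · show _ ∈ e i ∧ _ ∈ e (finRotate (n + 1) i : ℕ)
    by_cases h : (i : ℕ) < n
    · rw [coe_finRotate_of_ne_last (Fin.ne_of_val_ne (by simp; omega))]
      dsimp only
      rw [if_pos h]
      exact hinc i h
    · obtain rfl : i = Fin.last n := Fin.ext (by have := i.isLt; simp; omega)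
      simpa [finRotate_last] using ⟨hwn, hw₀⟩

theorem snoc (hp : IsBergePath H n e v) {g : Finset V} {w : V} (hg : g ∈ H)
    (hge : ∀ i ≤ n, e i ≠ g) (hwn : w ∈ e n) (hwg : w ∈ g) (hwv : ∀ i < n, v i ≠ w) :
    IsBergePath H (n + 1) (fun i => if i ≤ n then e i else g)
      (fun i => if i < n then v i else w) := by
  obtain ⟨hmem, he, hv, hinc⟩ := hp
  refine ⟨fun i _ => ?_, fun i hi j hj hij => ?_, fun i hi j hj hij => ?_, fun i hi => ?_⟩
  · dsimp only
    split_ifs with h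
    exacts [hmem i h, hg]
  · simp only [Set.mem_Iic] at hi hj
    dsimp only at hij
    split_ifs at hij with h₁ h₂ h₂
    · exact he h₁ h₂ hij
    · exact absurd hij (hge i h₁)
    · exact absurd hij.symm (hge j h₂)
    · omega
  · simp only [Set.mem_Iio] at hi hj
    dsimp only at hij
    split_ifs at hij with h₁ h₂ h₂
    · exact hv h₁ h₂ hij
    · exact absurd hij (hwv i h₁)
    · exact absurd hij.symm (hwv j h₂)
    · omega
  · dsimp only
    rcases Nat.lt_or_ge i n with h | h
    · simpa [h, h.le, Nat.succ_le_of_lt h] using hinc i h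
    · obtain rfl : i = n := by omega
      simpa using ⟨hwn, hwg⟩

/-- Either the path closes into a Berge cycle of length at most `#H`, or it can be prolonged. -/
theorem exists_succ [DecidableEq V] (hp : IsBergePath H n e v) (hH : GirthAtLeast H (#H + 1))
    (hlast : 1 < #(e n ∩ (H.erase (e n)).sup id)) :
    ∃ e' v', IsBergePath H (n + 1) e' v' := by
  have hn := hp.lt_card
  -- avoiding `v (n - 1)` makes a cycle through `w` have length at least `2`
  obtain ⟨w, hw, hwne⟩ := exists_mem_ne hlast (v (n - 1))
  obtain ⟨hwn, hwrest⟩ := mem_inter.mp hw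
  obtain ⟨g, hg, hwg⟩ := mem_sup.mp hwrest
  obtain ⟨hgn, hgH⟩ := mem_erase.mp hg
  by_cases hvw : ∃ j < n, v j = w
  · obtain ⟨j, hj, rfl⟩ := hvw
    obtain ⟨m, rfl⟩ : ∃ m, n = j + 1 + m := ⟨n - (j + 1), by omega⟩
    have hm : 1 ≤ m := by
      by_contra hm
      exact hwne (by congr 1; omega)
    refine absurd (hp.drop.hasBergeCycle (w := v j) hwn (by simpa using (hp.2.2.2 j hj).2)
      fun i hi hij => ?_) (hH (m + 1) (by omega) (by omega))
    have := hp.2.2.1 (show j + 1 + i < j + 1 + m by omega) (show j < j + 1 + m by omega) hij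
    omega
  push Not at hvw
  by_cases hge : ∃ i ≤ n, e i = g
  · obtain ⟨i, hi, rfl⟩ := hge
    obtain ⟨m, rfl⟩ : ∃ m, n = i + m := ⟨n - i, by omega⟩
    have hm : 1 ≤ m := by
      by_contra hm
      exact hgn (by congr 1; omega)
    refine absurd (hp.drop.hasBergeCycle hwn (by simpa using hwg)
      fun j hj => hvw _ (by omega)) (hH (m + 1) (by omega) (by omega))
  push Not at hge
  exact ⟨_, _, hp.snoc hgH hge hwn hwg hvw⟩

end IsBergePath

theorem GirthAtLeast.exists_card_inter_sup_erase_le_one [DecidableEq V] {H : Finset (Finset V)}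
    (hH : GirthAtLeast H (#H + 1)) (hne : H.Nonempty) :
    ∃ f ∈ H, #(f ∩ (H.erase f).sup id) ≤ 1 := by
  by_contra! hleaf
  have hpath : ∀ n, ∃ e v, IsBergePath H n e v := by
    intro n
    induction n with
    | zero =>
      obtain ⟨f, hf⟩ := hne
      obtain ⟨u, -⟩ := card_pos.mp (Nat.zero_lt_of_lt (hleaf f hf))
      exact ⟨fun _ => f, fun _ => u, fun _ _ => hf,
        fun i hi j hj _ => (Nat.le_zero.mp hi).trans (Nat.le_zero.mp hj).symm, by simp, by simp⟩
    | succ n ih =>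
      obtain ⟨e, v, hp⟩ := ih
      exact hp.exists_succ hH (hleaf _ (hp.1 n le_rfl))
  obtain ⟨e, v, hp⟩ := hpath #H
  exact lt_irrefl _ hp.lt_card

end BergeCycles

section Forests

variable {V : Type*} [DecidableEq V]

theorem sum_card_eq_sum_card_filter_mem (H : Finset (Finset V)) :
    ∑ f ∈ H, #f = ∑ u ∈ H.sup id, #{f ∈ H | u ∈ f} := by
  calc ∑ f ∈ H, #f = ∑ f ∈ H, #(H.sup id ∩ f) :=
        sum_congr rfl fun f hf => by
          rw [inter_eq_right.mpr]
          exact le_sup (f := id) hf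
    _ = ∑ u ∈ H.sup id, #{f ∈ H | u ∈ f} := by
        simp_rw [← filter_mem_eq_inter, card_eq_sum_ones, sum_filter]
        exact sum_comm

/-- The incidence graph of a Berge-acyclic hypergraph is a forest, so it has fewer incidences
than vertices plus edges. -/
theorem GirthAtLeast.sum_card_add_one_le {H : Finset (Finset V)}
    (hH : GirthAtLeast H (#H + 1)) (hne : H.Nonempty) :
    ∑ f ∈ H, #f + 1 ≤ #(H.sup id) + #H := by
  induction H using Finset.strongInduction with
  | H H ih =>
  obtain ⟨f, hf, hleaf⟩ := hH.exists_card_inter_sup_erase_le_one hne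
  have hsum := sum_erase_add H card hf
  have hsup : H.sup id = f ∪ (H.erase f).sup id := by
    rw [← insert_erase hf, sup_insert, erase_insert (notMem_erase f H)]
    rfl
  have hunion := card_union_add_card_inter f ((H.erase f).sup id)
  have hcard := card_erase_add_one hf
  rcases (H.erase f).eq_empty_or_nonempty with hrest | hrest
  · rw [hrest] at hsum hsup hcard
    simp only [sum_empty, zero_add] at hsum
    simp only [sup_empty, bot_eq_empty, union_empty] at hsup
    rw [hsup]
    omega
  · have := ih _ (erase_ssubset hf) (hH.mono (erase_subset f H) (by omega)) hrest
    rw [hsup]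
    omega

end Forests

section Absorbers

variable {V : Type*} [DecidableEq V]

theorem IsMatchingV.card_filter_mem_le_one {M : Finset (Finset V)} (hM : IsMatchingV M)
    (u : V) : #{f ∈ M | u ∈ f} ≤ 1 :=
  card_le_one.mpr fun a ha b hb => by
    by_contra hab
    exact disjoint_left.mp (hM a (mem_filter.mp ha).1 b (mem_filter.mp hb).1 hab)
      (mem_filter.mp ha).2 (mem_filter.mp hb).2

namespace IsAbsorberOn

variable {k m : ℕ} {H : Finset (Finset V)} {A : Finset V} {x : Fin m → V}

theorem card_filter_mem_le_two (hA : IsAbsorberOn k m H A x) (u : V) :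
    #{f ∈ H | u ∈ f} ≤ 2 := by
  obtain ⟨-, -, M₁, M₂, -, rfl, hM₁, hM₂, -⟩ := hA
  rw [filter_union]
  have h₁ := hM₁.card_filter_mem_le_one u
  have h₂ := hM₂.card_filter_mem_le_one u
  have := card_union_le {f ∈ M₁ | u ∈ f} {f ∈ M₂ | u ∈ f}
  omega

/-- A root is missed by the non-covering matching, so only the covering matching meets it. -/
theorem card_filter_mem_le_one (hA : IsAbsorberOn k m H A x) {u : V}
    (hu : u ∈ Set.range x) : #{f ∈ H | u ∈ f} ≤ 1 := by
  obtain ⟨-, hedge, M₁, M₂, -, rfl, hM₁, -, -, hroot⟩ := hA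
  have hM₂ : {f ∈ M₂ | u ∈ f} = ∅ := filter_eq_empty_iff.mpr fun g hg hug =>
    (hroot u ((hedge g (mem_union_right _ hg)).2 hug)).mp ⟨g, hg, hug⟩ hu
  rw [filter_union, hM₂, union_empty]
  exact hM₁.card_filter_mem_le_one u

end IsAbsorberOn

namespace IsContractedAbsorber

variable {k : ℕ} {H : Finset (Finset V)} {x : Fin k → V}

theorem card_eq (hH : IsContractedAbsorber k H x) {f : Finset V} (hf : f ∈ H) : #f = k := by
  obtain ⟨-, A, Hs, habs, -, rfl⟩ := hH
  obtain ⟨j, -, hj⟩ := mem_biUnion.mp hf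
  exact ((habs j).2.1 f hj).1

theorem two_le (hH : IsContractedAbsorber k H x) (hne : H.Nonempty) : 2 ≤ k := by
  obtain ⟨-, A, Hs, -, -, rfl⟩ := hH
  obtain ⟨f, hf⟩ := hne
  obtain ⟨j, -, -⟩ := mem_biUnion.mp hf
  have := j.isLt
  omega

theorem card_filter_mem_le_of_mem_range (hH : IsContractedAbsorber k H x) {u : V}
    (hu : u ∈ Set.range x) : #{f ∈ H | u ∈ f} ≤ k - 1 := by
  obtain ⟨-, A, Hs, habs, -, rfl⟩ := hH
  rw [filter_biUnion]
  calc #(univ.biUnion fun j => {f ∈ Hs j | u ∈ f})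
      ≤ ∑ j, #{f ∈ Hs j | u ∈ f} := card_biUnion_le
    _ ≤ ∑ _j : Fin (k - 1), 1 := sum_le_sum fun j _ => (habs j).card_filter_mem_le_one hu
    _ = k - 1 := by simp

/-- A vertex other than a root lies in a single sub-absorber, which contains all its edges. -/
theorem card_filter_mem_le_two (hH : IsContractedAbsorber k H x) {u : V}
    (hu : u ∉ Set.range x) : #{f ∈ H | u ∈ f} ≤ 2 := by
  obtain ⟨-, A, Hs, habs, hdisj, rfl⟩ := hH
  rcases eq_empty_or_nonempty {f ∈ univ.biUnion Hs | u ∈ f} with hempty | ⟨g, hg⟩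
  · simp [hempty]
  obtain ⟨hg, hug⟩ := mem_filter.mp hg
  obtain ⟨j, -, hgj⟩ := mem_biUnion.mp hg
  have hmem : ∀ {i f}, f ∈ Hs i → u ∈ f → u ∈ A i := fun hf huf => ((habs _).2.1 _ hf).2 huf
  refine (card_le_card fun f hf => ?_).trans ((habs j).card_filter_mem_le_two u)
  obtain ⟨hf, huf⟩ := mem_filter.mp hf
  obtain ⟨i, -, hfi⟩ := mem_biUnion.mp hf
  obtain rfl : i = j := by
    by_contra hij
    have := hdisj i j hij u (hmem hfi huf) (hmem hgj hug)
    simp_all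
  exact mem_filter.mpr ⟨hfi, huf⟩

theorem card_mul_le (hH : IsContractedAbsorber k H x) {H' : Finset (Finset V)}
    (hsub : H' ⊆ H) : k * #H' ≤ 2 * #(H'.sup id) + k * k := by
  have hdeg : ∀ u, #{f ∈ H' | u ∈ f} ≤ 2 + if u ∈ univ.image x then k else 0 := fun u => by
    have hle := card_le_card (filter_subset_filter (fun f => u ∈ f) hsub)
    split_ifs with hu
    · have := hH.card_filter_mem_le_of_mem_range (by simpa using hu)
      omega
    · have := hH.card_filter_mem_le_two (u := u) (by simpa using hu)
      omega
  have hroots : #(H'.sup id ∩ univ.image x) ≤ k :=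
    (card_le_card inter_subset_right).trans (card_image_le.trans (by simp))
  calc k * #H' = ∑ f ∈ H', #f := by
        rw [sum_congr rfl fun f hf => hH.card_eq (hsub hf), sum_const, smul_eq_mul, mul_comm]
    _ = ∑ u ∈ H'.sup id, #{f ∈ H' | u ∈ f} := sum_card_eq_sum_card_filter_mem H'
    _ ≤ ∑ u ∈ H'.sup id, (2 + if u ∈ univ.image x then k else 0) := sum_le_sum fun u _ => hdeg u
    _ = 2 * #(H'.sup id) + #(H'.sup id ∩ univ.image x) * k := by
        rw [sum_add_distrib, sum_ite_mem, sum_const, sum_const, smul_eq_mul, smul_eq_mul,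
          mul_comm]
    _ ≤ 2 * #(H'.sup id) + k * k := by gcongr

end IsContractedAbsorber

end Absorbers

theorem div_le_two_div_of_mul_add_one_le {k e v : ℕ} (hk : 2 ≤ k) (hv : k < v)
    (h : k * e + 1 ≤ v + e) : ((e : ℝ) - 1) / ((v : ℝ) - k) ≤ 2 / k := by
  have hk' : (2 : ℝ) ≤ k := by exact_mod_cast hk
  have hv' : (k : ℝ) < v := by exact_mod_cast hv
  have h' : (k : ℝ) * e + 1 ≤ v + e := by exact_mod_cast h
  rw [div_le_div_iff₀ (by linarith) (by linarith)]
  rcases Nat.eq_zero_or_pos e with rfl | he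
  · simp only [CharP.cast_eq_zero]
    nlinarith
  · have he' : (1 : ℝ) ≤ e := by exact_mod_cast he
    nlinarith [mul_nonneg (sub_nonneg.mpr hk') (sub_nonneg.mpr he')]

/-- From `k e ≤ 2 v + k²`: `(e - 1)/(v - k) ≤ 2/k + (k + 1)/(v - k)`. -/
theorem div_le_two_div_add_of_mul_le {k e v : ℕ} {η : ℝ} (hk : 0 < k) (hv : k < v)
    (h : k * e ≤ 2 * v + k * k) (hη : ((k : ℝ) + 1) / η ≤ v - k) (hη₀ : 0 < η) :
    ((e : ℝ) - 1) / ((v : ℝ) - k) ≤ 2 / k + η := by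
  have hk' : (0 : ℝ) < k := by exact_mod_cast hk
  have hvk : (0 : ℝ) < v - k := sub_pos.mpr (by exact_mod_cast hv)
  have h' : (k : ℝ) * e ≤ 2 * v + k * k := by exact_mod_cast h
  have hη' : (k : ℝ) + 1 ≤ η * (v - k) := (div_le_iff₀' hη₀).mp hη
  rw [div_le_iff₀ hvk, add_mul, div_mul_eq_mul_div, ← sub_le_iff_le_add, le_div_iff₀ hk']
  nlinarith

/-- Fix `η > 0` and `k ∈ ℕ`. There is `K` such that every `k`-uniform
contracted absorber `H` with girth at least `K` has `k`-density `m_k(H) ≤ 2/k + η`, i.e.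
every subgraph `H' ⊆ H` with more than `k` vertices satisfies
`(e(H') - 1)/(v(H') - k) ≤ 2/k + η`. -/
theorem contracted_absorber_density (η : ℝ) (hη : 0 < η) (k : ℕ) :
    ∃ K : ℕ, 0 < K ∧ ∀ (V : Type) [DecidableEq V],
      ∀ (H : Finset (Finset V)) (x : Fin k → V),
        IsContractedAbsorber k H x → GirthAtLeast H K →
        ∀ H' ⊆ H, k < (H'.sup id).card →
          ((H'.card : ℝ) - 1) / (((H'.sup id).card : ℝ) - (k : ℝ)) ≤ 2 / (k : ℝ) + η := by
  set c := ⌈((k : ℝ) + 1) / η⌉₊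
  refine ⟨2 * k + c + 1, by omega, fun V _ H x hH hgirth H' hsub hv => ?_⟩
  have hne : H'.Nonempty := nonempty_iff_ne_empty.mpr fun h => by simp [h] at hv
  have hk := hH.two_le (hne.mono hsub)
  rcases lt_or_ge #H' (2 * k + c + 1) with hsmall | hlarge
  · have hforest := (hgirth.mono hsub (by omega)).sum_card_add_one_le hne
    rw [sum_congr rfl fun f hf => hH.card_eq (hsub hf), sum_const, smul_eq_mul] at hforest
    exact (div_le_two_div_of_mul_add_one_le hk hv (by linarith)).trans
      (le_add_of_nonneg_right hη.le)
  · have hcount := hH.card_mul_le hsub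
    have hvc : k + c ≤ #(H'.sup id) := by nlinarith
    refine div_le_two_div_add_of_mul_le (by omega) hv hcount ?_ hη
    have : (k : ℝ) + c ≤ #(H'.sup id) := by exact_mod_cast hvc
    linarith [Nat.le_ceil (((k : ℝ) + 1) / η)]

end DiracRandom
end
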